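/- Let Γ be a basic game that has a strictly convex potential in each state, and let μ be a Bayes correlated Wardrop equilibrium of Γ with finite support such that every flow profile in the support of every μ(·|θ) has rational coordinates. Then there exists a direct information structure I such that the obedient interim flow profile of I is a Bayesian Wardrop equilibrium of (Γ, I), its obedient outcome μ̆_I equals μ, and μ̆_I is the unique Bayesian Wardrop equilibrium outcome of (Γ, I). -/

import Mathlib

/-!
A Bayesian Wardrop equilibrium `ŷ` of `(Γ, I)` minimizes the expected potential
`Φ_π(ŷ) = Σ_θ Σ_τ p(θ) π(τ | θ) Φ_θ(y(τ))` over all interim flow profiles: by convexity,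
`Φ_π(ŷ') - Φ_π(ŷ)` is at least `Σ_k Σ_τᵏ ⟪ŷ'ᵏ(τᵏ) - ŷᵏ(τᵏ), C^{k,τᵏ}(ŷ)⟫`, and every term is
nonnegative because each type only uses actions of minimal auxiliary cost. Interim profiles
form a convex set, and strict convexity of `Φ_θ` makes the midpoint of two minimizers strictly
better unless their total flows agree at every type profile of positive probability; hence all
equilibria induce the same outcome.

For the implementation, let `N` be a common denominator of the coordinates of the support
points. A support point `z` is then realised by `N` populations of size `1 / N`, exactly `N z_a`
of which are assigned to action `a` by some `σ_z : ZMod N → A`. Draw `z` from `μ(· | θ)` and a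
uniform shift `j`, and recommend `σ_z (k + j)` to population `k`. The total obedient flow is
always `z`, and population `k` is recommended `a` in state `θ` with weight `μ(z | θ) z_a`, so
obedience is exactly the BCWE inequality.
-/

noncomputable section

namespace NonatomicGames

/-- An information structure: finitely many populations with sizes summing to one,
a finite type set per population, and a signal distribution `π θ` for each state. -/
structure InfoStructure (Θ : Type) where
  K : Type
  [instFintypeK : Fintype K]
  [instDecEqK : DecidableEq K]
  T : K → Type
  [instFintypeT : ∀ k, Fintype (T k)]
  [instDecEqT : ∀ k, DecidableEq (T k)]
  γ : K → ℝ
  γ_pos : ∀ k, 0 < γ k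
  γ_sum : ∑ k, γ k = 1
  π : Θ → (∀ k, T k) → ℝ
  π_nonneg : ∀ θ τ, 0 ≤ π θ τ
  π_sum : ∀ θ, ∑ τ, π θ τ = 1

attribute [instance] InfoStructure.instFintypeK InfoStructure.instDecEqK
  InfoStructure.instFintypeT InfoStructure.instDecEqT

/-- A direct information structure: the type set of each population is the action set `A`. -/
structure DirectInfoStructure (A Θ : Type) [Fintype A] [DecidableEq A] where
  K : Type
  [instFintypeK : Fintype K]
  [instDecEqK : DecidableEq K]
  γ : K → ℝ
  γ_pos : ∀ k, 0 < γ k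
  γ_sum : ∑ k, γ k = 1
  π : Θ → (K → A) → ℝ
  π_nonneg : ∀ θ τ, 0 ≤ π θ τ
  π_sum : ∀ θ, ∑ τ, π θ τ = 1

attribute [instance] DirectInfoStructure.instFintypeK DirectInfoStructure.instDecEqK

open MeasureTheory Finset

variable {A Θ : Type} [Fintype A] [DecidableEq A] [Fintype Θ]

/-- The information structure associated with a direct information structure. -/
def DirectInfoStructure.toInfo (I : DirectInfoStructure A Θ) : InfoStructure Θ where
  K := I.K
  instFintypeK := I.instFintypeK
  instDecEqK := I.instDecEqK
  T := fun _ => A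
  instFintypeT := fun _ => inferInstanceAs (Fintype A)
  instDecEqT := fun _ => inferInstanceAs (DecidableEq A)
  γ := I.γ
  γ_pos := I.γ_pos
  γ_sum := I.γ_sum
  π := I.π
  π_nonneg := I.π_nonneg
  π_sum := I.π_sum

/-- The obedient interim flow profile of a direct information structure:
population `k` receiving recommendation `t` puts all its mass `γ k` on action `t`. -/
def DirectInfoStructure.obedient (I : DirectInfoStructure A Θ) :
    ∀ _k : I.K, A → A → ℝ :=
  fun k t a => if t = a then I.γ k else 0

/-- `yhat` is an interim flow profile: nonnegative flows summing to the population sizes. -/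
def IsInterim (I : InfoStructure Θ) (yhat : ∀ k, I.T k → A → ℝ) : Prop :=
  (∀ k t a, 0 ≤ yhat k t a) ∧ ∀ k t, ∑ a, yhat k t a = I.γ k

/-- The interim total flow profile given the type profile `τ`. -/
def totalFlow (I : InfoStructure Θ) (yhat : ∀ k, I.T k → A → ℝ) (τ : ∀ k, I.T k) :
    A → ℝ :=
  fun a => ∑ k, yhat k (τ k) a

/-- The total probability `P(τᵏ)` of type `tk` for population `k`. -/
def typeProb (I : InfoStructure Θ) (p : Θ → ℝ) (k : I.K) (tk : I.T k) : ℝ :=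
  ∑ θ, ∑ τ : ∀ j, I.T j, if τ k = tk then p θ * I.π θ τ else 0

/-- Bayesian Wardrop ε-equilibrium of the basic game `(p, c)` extended with `I`. -/
def IsBWEps (I : InfoStructure Θ) (p : Θ → ℝ) (c : A → (A → ℝ) → Θ → ℝ) (ε : ℝ)
    (yhat : ∀ k, I.T k → A → ℝ) : Prop :=
  IsInterim I yhat ∧
  ∀ (k : I.K) (tk : I.T k), 0 < typeProb I p k tk →
    ∀ a b : A, 0 < yhat k tk a →
      (∑ θ, ∑ τ : ∀ j, I.T j,
        if τ k = tk then
          p θ * I.π θ τ * (c a (totalFlow I yhat τ) θ - c b (totalFlow I yhat τ) θ)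
        else 0)
      ≤ ε * typeProb I p k tk

/-- The outcome (state-dependent distribution over flow profiles) induced by `yhat`. -/
def outcomeMeasure (I : InfoStructure Θ) (yhat : ∀ k, I.T k → A → ℝ) (θ : Θ) :
    Measure (A → ℝ) :=
  ∑ τ : ∀ k, I.T k, ENNReal.ofReal (I.π θ τ) • Measure.dirac (totalFlow I yhat τ)

/-- The probability that the induced outcome puts on the flow profile `z` in state `θ`. -/
def outcomeWeight (I : InfoStructure Θ) (yhat : ∀ k, I.T k → A → ℝ) (θ : Θ)
    (z : A → ℝ) : ℝ :=
  ∑ τ : ∀ k, I.T k, if totalFlow I yhat τ = z then I.π θ τ else 0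

/-- The auxiliary (non-normalized interim) cost `C_a^{k,τᵏ}(yhat)`. -/
def auxCost (I : InfoStructure Θ) (p : Θ → ℝ) (c : A → (A → ℝ) → Θ → ℝ)
    (yhat : ∀ k, I.T k → A → ℝ) (k : I.K) (tk : I.T k) (a : A) : ℝ :=
  ∑ θ, ∑ τ : ∀ j, I.T j,
    if τ k = tk then p θ * I.π θ τ * c a (totalFlow I yhat τ) θ else 0

/-- The potential `Φ_π` of the auxiliary multi-population game. -/
def potPi (I : InfoStructure Θ) (p : Θ → ℝ) (Φ : Θ → (A → ℝ) → ℝ)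
    (yhat : ∀ k, I.T k → A → ℝ) : ℝ :=
  ∑ θ, ∑ τ : ∀ k, I.T k, p θ * I.π θ τ * Φ θ (totalFlow I yhat τ)

/-- The social cost `SC(y, θ) = Σ_a y_a c_a(y, θ)`. -/
def socialCost (c : A → (A → ℝ) → Θ → ℝ) (y : A → ℝ) (θ : Θ) : ℝ :=
  ∑ a, y a * c a y θ

/-- The total cost `TC(yhat)`. -/
def totalCost (I : InfoStructure Θ) (p : Θ → ℝ) (c : A → (A → ℝ) → Θ → ℝ)
    (yhat : ∀ k, I.T k → A → ℝ) : ℝ :=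
  ∑ k, ∑ tk : I.T k, ∑ a, yhat k tk a * auxCost I p c yhat k tk a

/-- An outcome: a state-dependent Borel probability measure supported on the simplex `Y`. -/
def IsOutcome (μ : Θ → Measure (A → ℝ)) : Prop :=
  (∀ θ, IsProbabilityMeasure (μ θ)) ∧ ∀ θ, μ θ (stdSimplex ℝ A)ᶜ = 0

/-- Bayes correlated Wardrop equilibrium of the basic game `(p, c)`. -/
def IsBCWE (p : Θ → ℝ) (c : A → (A → ℝ) → Θ → ℝ) (μ : Θ → Measure (A → ℝ)) : Prop :=
  IsOutcome μ ∧
  ∀ a b : A,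
    ∑ θ, p θ * ∫ y, y a * c a y θ ∂(μ θ) ≤ ∑ θ, p θ * ∫ y, y a * c b y θ ∂(μ θ)

/-- `Φ` is a (state-by-state) potential for the cost profile `c`: for each state it is
continuously differentiable on an open neighborhood of the simplex and its partial
derivative in the direction of each action `a` is the cost of `a`. -/
def IsPotential (c : A → (A → ℝ) → Θ → ℝ) (Φ : Θ → (A → ℝ) → ℝ) : Prop :=
  ∀ θ, ∃ U : Set (A → ℝ), IsOpen U ∧ stdSimplex ℝ A ⊆ U ∧
    ContDiffOn ℝ 1 (Φ θ) U ∧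
    ∀ y ∈ stdSimplex ℝ A, ∀ a, fderiv ℝ (Φ θ) y (Pi.single a 1) = c a y θ

end NonatomicGames

namespace NonatomicGames

open MeasureTheory Finset

theorem _root_.ConvexOn.add_fderiv_sub_le {E : Type*} [NormedAddCommGroup E] [NormedSpace ℝ E]
    {s : Set E} {f : E → ℝ} {x y : E} (hf : ConvexOn ℝ s f) (hx : x ∈ s) (hy : y ∈ s)
    (hd : DifferentiableAt ℝ f x) :
    f x + fderiv ℝ f x (y - x) ≤ f y := by
  let g : ℝ →ᵃ[ℝ] E := AffineMap.lineMap x y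
  have hderiv : HasDerivAt (f ∘ g) (fderiv ℝ f x (y - x)) 0 :=
    hd.hasFDerivAt.comp_hasDerivAt_of_eq (0 : ℝ) AffineMap.hasDerivAt_lineMap
      (AffineMap.lineMap_apply_zero x y).symm
  have := (hf.comp_affineMap g).le_slope_of_hasDerivAt (by simpa [g]) (by simpa [g]) one_pos
    hderiv
  simp only [slope_def_field, Function.comp_apply, g, AffineMap.lineMap_apply_zero,
    AffineMap.lineMap_apply_one, sub_zero, div_one] at this
  linarith

theorem _root_.ConvexOn.add_sum_mul_le_of_fderiv_single {A : Type} [Fintype A] [DecidableEq A]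
    {s U : Set (A → ℝ)} {f : (A → ℝ) → ℝ} {g : A → (A → ℝ) → ℝ} (hf : ConvexOn ℝ s f)
    (hU : IsOpen U) (hsU : s ⊆ U) (hfU : ContDiffOn ℝ 1 f U)
    (hg : ∀ y ∈ s, ∀ a, fderiv ℝ f y (Pi.single a 1) = g a y) {x y : A → ℝ}
    (hx : x ∈ s) (hy : y ∈ s) :
    f x + ∑ a, (y a - x a) * g a x ≤ f y := by
  have hd : DifferentiableAt ℝ f x :=
    (hfU.contDiffAt (hU.mem_nhds (hsU hx))).differentiableAt one_ne_zero
  have hlin : fderiv ℝ f x (y - x) = ∑ a, (y a - x a) * g a x := by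
    conv_lhs => rw [← Finset.univ_sum_single (y - x)]
    refine (map_sum _ _ _).trans (Finset.sum_congr rfl fun a _ => ?_)
    rw [← hg x hx a, ← smul_eq_mul, ← map_smul, ← Pi.single_smul', smul_eq_mul, mul_one,
      Pi.sub_apply]
  simpa [hlin] using hf.add_fderiv_sub_le hx hy hd

theorem _root_.Finset.sum_sub_mul_nonneg_of_forall_le {ι : Type*} [Fintype ι] {x x' C : ι → ℝ}
    (hx' : ∀ i, 0 ≤ x' i) (hsum : ∑ i, x' i = ∑ i, x i) (hC : ∀ i j, 0 < x i → C i ≤ C j) :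
    0 ≤ ∑ i, (x' i - x i) * C i := by
  rcases isEmpty_or_nonempty ι with hι | hι
  · simp
  obtain ⟨i₀, -, hi₀⟩ := Finset.exists_min_image univ C univ_nonempty
  have hshift : ∑ i, (x' i - x i) * C i = ∑ i, (x' i - x i) * (C i - C i₀) := by
    simp only [mul_sub, Finset.sum_sub_distrib, ← Finset.sum_mul, hsum, sub_self, zero_mul,
      sub_zero]
  rw [hshift]
  refine Finset.sum_nonneg fun i _ => ?_
  have hle : C i₀ ≤ C i := hi₀ i (mem_univ i)
  rcases lt_or_ge 0 (x i) with hxi | hxi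
  · rw [le_antisymm (hC i i₀ hxi) hle, sub_self, mul_zero]
  · exact mul_nonneg (by linarith [hx' i]) (sub_nonneg.2 hle)

section InterimProfiles

variable {A Θ : Type} {I : InfoStructure Θ}

theorem totalFlow_add (y₁ y₂ : ∀ k, I.T k → A → ℝ) (τ : ∀ k, I.T k) :
    totalFlow I (y₁ + y₂) τ = totalFlow I y₁ τ + totalFlow I y₂ τ := by
  funext a
  simp [totalFlow, Finset.sum_add_distrib]

theorem totalFlow_sub (y₁ y₂ : ∀ k, I.T k → A → ℝ) (τ : ∀ k, I.T k) :
    totalFlow I (y₁ - y₂) τ = totalFlow I y₁ τ - totalFlow I y₂ τ := by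
  funext a
  simp [totalFlow, Finset.sum_sub_distrib]

theorem totalFlow_smul (r : ℝ) (y : ∀ k, I.T k → A → ℝ) (τ : ∀ k, I.T k) :
    totalFlow I (r • y) τ = r • totalFlow I y τ := by
  funext a
  simp [totalFlow, Finset.mul_sum]

variable [Fintype A]

theorem IsInterim.totalFlow_mem_stdSimplex {y : ∀ k, I.T k → A → ℝ} (hy : IsInterim I y)
    (τ : ∀ k, I.T k) : totalFlow I y τ ∈ stdSimplex ℝ A := by
  refine ⟨fun a => Finset.sum_nonneg fun k _ => hy.1 k (τ k) a, ?_⟩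
  simp only [totalFlow]
  rw [Finset.sum_comm, Finset.sum_congr rfl fun k _ => hy.2 k (τ k), I.γ_sum]

theorem convex_setOf_isInterim : Convex ℝ {y : ∀ k, I.T k → A → ℝ | IsInterim I y} := by
  intro y₁ hy₁ y₂ hy₂ a b ha hb hab
  refine ⟨fun k t x => ?_, fun k t => ?_⟩
  · simp only [Pi.add_apply, Pi.smul_apply, smul_eq_mul]
    exact add_nonneg (mul_nonneg ha (hy₁.1 k t x)) (mul_nonneg hb (hy₂.1 k t x))
  · simp only [Pi.add_apply, Pi.smul_apply, smul_eq_mul, Finset.sum_add_distrib,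
      ← Finset.mul_sum, hy₁.2 k t, hy₂.2 k t, ← add_mul, hab, one_mul]

end InterimProfiles

section Potential

variable {A Θ : Type} [Fintype Θ] {I : InfoStructure Θ} {p : Θ → ℝ}
  {c : A → (A → ℝ) → Θ → ℝ}

theorem auxCost_eq_zero_of_typeProb_nonpos (hp : ∀ θ, 0 ≤ p θ) (y : ∀ k, I.T k → A → ℝ)
    {k : I.K} {tk : I.T k} (hP : typeProb I p k tk ≤ 0) (a : A) :
    auxCost I p c y k tk a = 0 := by
  have hnonneg : ∀ θ (τ : ∀ j, I.T j), 0 ≤ if τ k = tk then p θ * I.π θ τ else 0 := by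
    intro θ τ
    split_ifs
    exacts [mul_nonneg (hp θ) (I.π_nonneg θ τ), le_rfl]
  have hzero := (Finset.sum_eq_zero_iff_of_nonneg fun θ _ => Finset.sum_nonneg
    fun τ _ => hnonneg θ τ).1 (le_antisymm hP (Finset.sum_nonneg fun θ _ =>
      Finset.sum_nonneg fun τ _ => hnonneg θ τ))
  refine Finset.sum_eq_zero fun θ hθ => Finset.sum_eq_zero fun τ hτ => ?_
  have := (Finset.sum_eq_zero_iff_of_nonneg fun τ _ => hnonneg θ τ).1 (hzero θ hθ) τ hτ
  split_ifs at this ⊢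
  · rw [this, zero_mul]
  · rfl

variable [Fintype A]

theorem IsBWEps.auxCost_le {y : ∀ k, I.T k → A → ℝ} (hy : IsBWEps I p c 0 y) {k : I.K}
    {tk : I.T k} (hP : 0 < typeProb I p k tk) {a : A} (ha : 0 < y k tk a) (b : A) :
    auxCost I p c y k tk a ≤ auxCost I p c y k tk b := by
  have h := hy.2 k tk hP a b ha
  rw [zero_mul] at h
  rw [← sub_nonpos]
  convert h using 1
  simp only [auxCost, ← Finset.sum_sub_distrib]
  refine Finset.sum_congr rfl fun θ _ => Finset.sum_congr rfl fun τ _ => ?_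
  split_ifs <;> ring

theorem IsBWEps.sum_sub_mul_auxCost_nonneg (hp : ∀ θ, 0 ≤ p θ) {y w : ∀ k, I.T k → A → ℝ}
    (hy : IsBWEps I p c 0 y) (hw : IsInterim I w) (k : I.K) (tk : I.T k) :
    0 ≤ ∑ a, (w k tk a - y k tk a) * auxCost I p c y k tk a := by
  by_cases hP : 0 < typeProb I p k tk
  · exact Finset.sum_sub_mul_nonneg_of_forall_le (hw.1 k tk) (by rw [hw.2, hy.1.2])
      fun a b ha => hy.auxCost_le hP ha b
  · simp [auxCost_eq_zero_of_typeProb_nonpos hp y (not_lt.1 hP)]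

theorem sum_totalFlow_mul_cost_eq_sum_auxCost (v y : ∀ k, I.T k → A → ℝ) :
    ∑ θ, ∑ τ, p θ * I.π θ τ * ∑ a, totalFlow I v τ a * c a (totalFlow I y τ) θ =
      ∑ k, ∑ tk : I.T k, ∑ a, v k tk a * auxCost I p c y k tk a := by
  have hfiber : ∀ k a, ∑ tk : I.T k, v k tk a * auxCost I p c y k tk a =
      ∑ θ, ∑ τ, p θ * I.π θ τ * (v k (τ k) a * c a (totalFlow I y τ) θ) := by
    intro k a
    simp only [auxCost, Finset.mul_sum, mul_ite, mul_zero]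
    rw [Finset.sum_comm]
    refine Finset.sum_congr rfl fun θ _ => ?_
    rw [Finset.sum_comm]
    refine Finset.sum_congr rfl fun τ _ => ?_
    rw [Finset.sum_ite_eq, if_pos (mem_univ _)]
    ring
  calc ∑ θ, ∑ τ, p θ * I.π θ τ * ∑ a, totalFlow I v τ a * c a (totalFlow I y τ) θ
      = ∑ θ, ∑ k, ∑ τ, ∑ a, p θ * I.π θ τ * (v k (τ k) a * c a (totalFlow I y τ) θ) := by
        simp only [totalFlow, Finset.sum_mul, Finset.mul_sum]
        exact Finset.sum_congr rfl fun θ _ =>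
          (Finset.sum_congr rfl fun τ _ => Finset.sum_comm).trans Finset.sum_comm
    _ = ∑ k, ∑ a, ∑ θ, ∑ τ, p θ * I.π θ τ * (v k (τ k) a * c a (totalFlow I y τ) θ) := by
        rw [Finset.sum_comm]
        exact Finset.sum_congr rfl fun k _ =>
          (Finset.sum_congr rfl fun θ _ => Finset.sum_comm).trans Finset.sum_comm
    _ = ∑ k, ∑ tk : I.T k, ∑ a, v k tk a * auxCost I p c y k tk a := by
        simp only [← hfiber]
        exact Finset.sum_congr rfl fun k _ => Finset.sum_comm

theorem IsBWEps.potPi_le [DecidableEq A] (hp : ∀ θ, 0 ≤ p θ) {Φ : Θ → (A → ℝ) → ℝ}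
    (hΦ : IsPotential c Φ) (hconv : ∀ θ, ConvexOn ℝ (stdSimplex ℝ A) (Φ θ))
    {y w : ∀ k, I.T k → A → ℝ} (hy : IsBWEps I p c 0 y) (hw : IsInterim I w) :
    potPi I p Φ y ≤ potPi I p Φ w := by
  have htangent : ∀ θ τ, Φ θ (totalFlow I y τ) +
      ∑ a, totalFlow I (w - y) τ a * c a (totalFlow I y τ) θ ≤ Φ θ (totalFlow I w τ) := by
    intro θ τ
    obtain ⟨U, hU, hsU, hΦU, hder⟩ := hΦ θ
    simpa [totalFlow_sub] using (hconv θ).add_sum_mul_le_of_fderiv_single hU hsU hΦU hder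
      (hy.1.totalFlow_mem_stdSimplex τ) (hw.totalFlow_mem_stdSimplex τ)
  calc potPi I p Φ y
      ≤ potPi I p Φ y + ∑ k, ∑ tk : I.T k, ∑ a, (w - y) k tk a * auxCost I p c y k tk a :=
        le_add_of_nonneg_right <| Finset.sum_nonneg fun k _ => Finset.sum_nonneg fun tk _ =>
          hy.sum_sub_mul_auxCost_nonneg hp hw k tk
    _ = ∑ θ, ∑ τ, p θ * I.π θ τ * (Φ θ (totalFlow I y τ) +
          ∑ a, totalFlow I (w - y) τ a * c a (totalFlow I y τ) θ) := by
        simp only [← sum_totalFlow_mul_cost_eq_sum_auxCost, potPi, mul_add, Finset.sum_add_distrib]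
    _ ≤ potPi I p Φ w := Finset.sum_le_sum fun θ _ => Finset.sum_le_sum fun τ _ =>
        mul_le_mul_of_nonneg_left (htangent θ τ) (mul_nonneg (hp θ) (I.π_nonneg θ τ))

theorem potPi_smul_add_smul_lt (hp : ∀ θ, 0 < p θ) {Φ : Θ → (A → ℝ) → ℝ}
    (hconv : ∀ θ, StrictConvexOn ℝ (stdSimplex ℝ A) (Φ θ)) {y₁ y₂ : ∀ k, I.T k → A → ℝ}
    (hy₁ : IsInterim I y₁) (hy₂ : IsInterim I y₂) {a b : ℝ} (ha : 0 < a) (hb : 0 < b)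
    (hab : a + b = 1) {θ₀ : Θ} {τ₀ : ∀ k, I.T k} (hπ : 0 < I.π θ₀ τ₀)
    (hne : totalFlow I y₁ τ₀ ≠ totalFlow I y₂ τ₀) :
    potPi I p Φ (a • y₁ + b • y₂) < a * potPi I p Φ y₁ + b * potPi I p Φ y₂ := by
  have hconvex : ∀ θ τ, Φ θ (totalFlow I (a • y₁ + b • y₂) τ) ≤
      a * Φ θ (totalFlow I y₁ τ) + b * Φ θ (totalFlow I y₂ τ) := fun θ τ => by
    simpa [totalFlow_add, totalFlow_smul] using (hconv θ).convexOn.2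
      (hy₁.totalFlow_mem_stdSimplex τ) (hy₂.totalFlow_mem_stdSimplex τ) ha.le hb.le hab
  have hstrict : Φ θ₀ (totalFlow I (a • y₁ + b • y₂) τ₀) <
      a * Φ θ₀ (totalFlow I y₁ τ₀) + b * Φ θ₀ (totalFlow I y₂ τ₀) := by
    simpa [totalFlow_add, totalFlow_smul] using (hconv θ₀).2
      (hy₁.totalFlow_mem_stdSimplex τ₀) (hy₂.totalFlow_mem_stdSimplex τ₀) hne ha hb hab
  simp only [potPi, Finset.mul_sum, ← Finset.sum_add_distrib]
  refine Finset.sum_lt_sum (fun θ _ => Finset.sum_le_sum fun τ _ => ?_)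
    ⟨θ₀, mem_univ _, Finset.sum_lt_sum (fun τ _ => ?_) ⟨τ₀, mem_univ _, ?_⟩⟩
  · nlinarith [hconvex θ τ, mul_nonneg (hp θ).le (I.π_nonneg θ τ)]
  · nlinarith [hconvex θ₀ τ, mul_nonneg (hp θ₀).le (I.π_nonneg θ₀ τ)]
  · nlinarith [mul_pos (hp θ₀) hπ]

theorem IsBWEps.totalFlow_eq [DecidableEq A] (hp : ∀ θ, 0 < p θ) {Φ : Θ → (A → ℝ) → ℝ}
    (hΦ : IsPotential c Φ) (hconv : ∀ θ, StrictConvexOn ℝ (stdSimplex ℝ A) (Φ θ))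
    {y₁ y₂ : ∀ k, I.T k → A → ℝ} (hy₁ : IsBWEps I p c 0 y₁) (hy₂ : IsBWEps I p c 0 y₂)
    {θ : Θ} {τ : ∀ k, I.T k} (hπ : 0 < I.π θ τ) :
    totalFlow I y₁ τ = totalFlow I y₂ τ := by
  by_contra hne
  have hmid : IsInterim I ((1 / 2 : ℝ) • y₁ + (1 / 2 : ℝ) • y₂) :=
    convex_setOf_isInterim hy₁.1 hy₂.1 (by norm_num) (by norm_num) (by norm_num)
  have h₁ := hy₁.potPi_le (fun θ => (hp θ).le) hΦ (fun θ => (hconv θ).convexOn) hmid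
  have h₂ := hy₂.potPi_le (fun θ => (hp θ).le) hΦ (fun θ => (hconv θ).convexOn) hmid
  have := potPi_smul_add_smul_lt (a := 1 / 2) (b := 1 / 2) hp hconv hy₁.1 hy₂.1 (by norm_num)
    (by norm_num) (by norm_num) hπ hne
  linarith

end Potential

theorem outcomeMeasure_congr {A Θ : Type} {I : InfoStructure Θ} {y₁ y₂ : ∀ k, I.T k → A → ℝ}
    {θ : Θ} (h : ∀ τ, 0 < I.π θ τ → totalFlow I y₁ τ = totalFlow I y₂ τ) :
    outcomeMeasure I y₁ θ = outcomeMeasure I y₂ θ := by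
  refine Finset.sum_congr rfl fun τ _ => ?_
  rcases (I.π_nonneg θ τ).lt_or_eq with hπ | hπ
  · rw [h τ hπ]
  · simp [← hπ]

theorem _root_.Finset.sum_sum_ite_eq_smul {β κ R M : Type*} [Fintype β] [DecidableEq β]
    [Fintype κ] [Semiring R] [AddCommMonoid M] [Module R M] (s : κ → β) (r : κ → R)
    (F : β → M) :
    ∑ b, (∑ x, if b = s x then r x else 0) • F b = ∑ x, r x • F (s x) := by
  simp only [Finset.sum_smul, ite_smul, zero_smul]
  rw [Finset.sum_comm]
  simp

theorem _root_.Fintype.sum_comp_add_left {G α M : Type*} [AddGroup G] [Fintype G] [Fintype α]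
    [DecidableEq α] [AddCommMonoid M] (f : G → α) (g : G) (F : α → M) :
    ∑ h, F (f (g + h)) = ∑ a, #{h | f h = a} • F a := by
  calc ∑ h, F (f (g + h)) = ∑ h, F (f h) := Equiv.sum_comp (Equiv.addLeft g) (F ∘ f)
    _ = ∑ a, #{h | f h = a} • F a := by
      rw [← Finset.sum_fiberwise' univ f F]
      simp only [Finset.sum_const]

theorem DirectInfoStructure.isInterim_obedient {A Θ : Type} [Fintype A] [DecidableEq A]
    (I : DirectInfoStructure A Θ) : IsInterim I.toInfo I.obedient := by
  refine ⟨fun (k : I.K) (t a : A) => ?_, fun (k : I.K) (t : A) => ?_⟩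
  · unfold DirectInfoStructure.obedient
    split_ifs
    exacts [(I.γ_pos k).le, le_rfl]
  · simp [DirectInfoStructure.obedient, DirectInfoStructure.toInfo]

section CyclicSignals

variable {A Θ ι : Type} [Fintype A] [DecidableEq A] [Fintype ι] {N : ℕ} [NeZero N]

def cyclicShift (σ : ι → ZMod N → A) (x : ι × ZMod N) : ZMod N → A :=
  fun k => σ x.1 (k + x.2)

def cyclicInfo (σ : ι → ZMod N → A) (w : Θ → ι → ℝ) (hw₀ : ∀ θ i, 0 ≤ w θ i)
    (hw₁ : ∀ θ, ∑ i, w θ i = 1) : DirectInfoStructure A Θ where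
  K := ZMod N
  γ _ := (N : ℝ)⁻¹
  γ_pos _ := by simp [NeZero.pos N]
  γ_sum := by simp
  π θ τ := ∑ x, if τ = cyclicShift σ x then w θ x.1 / N else 0
  π_nonneg θ τ := Finset.sum_nonneg fun x _ => by
    split_ifs
    exacts [div_nonneg (hw₀ θ x.1) (Nat.cast_nonneg N), le_rfl]
  π_sum θ := by
    have := Finset.sum_sum_ite_eq_smul (cyclicShift σ) (fun x => w θ x.1 / N) fun _ => (1 : ℝ)
    simp only [smul_eq_mul, mul_one] at this
    rw [this, Fintype.sum_prod_type]
    simp [mul_div_cancel₀ _ (NeZero.ne (N : ℝ)), hw₁]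

variable {σ : ι → ZMod N → A} {w : Θ → ι → ℝ} {hw₀ : ∀ θ i, 0 ≤ w θ i}
  {hw₁ : ∀ θ, ∑ i, w θ i = 1} {z : ι → A → ℝ}

theorem totalFlow_obedient_cyclicShift (hσ : ∀ i a, (#{k | σ i k = a} : ℝ) = N * z i a)
    (x : ι × ZMod N) :
    totalFlow (cyclicInfo σ w hw₀ hw₁).toInfo (cyclicInfo σ w hw₀ hw₁).obedient
      (cyclicShift σ x) = z x.1 := by
  funext a
  show ∑ k : ZMod N, (if σ x.1 (k + x.2) = a then (N : ℝ)⁻¹ else 0) = z x.1 a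
  simp only [add_comm _ x.2, Fintype.sum_comp_add_left (σ x.1) x.2 fun b =>
    if b = a then (N : ℝ)⁻¹ else 0, smul_ite, smul_zero, Finset.sum_ite_eq', mem_univ, if_true,
    nsmul_eq_mul, hσ]
  field_simp [NeZero.ne (N : ℝ)]

theorem cyclicInfo_sum_π_mul (hσ : ∀ i a, (#{k | σ i k = a} : ℝ) = N * z i a) (θ : Θ)
    (k : ZMod N) (G : A → (A → ℝ) → ℝ) :
    ∑ τ : ZMod N → A, (cyclicInfo σ w hw₀ hw₁).π θ τ * G (τ k)
      (totalFlow (cyclicInfo σ w hw₀ hw₁).toInfo (cyclicInfo σ w hw₀ hw₁).obedient τ) =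
      ∑ i, w θ i * ∑ a, z i a * G a (z i) := by
  refine (Finset.sum_sum_ite_eq_smul (cyclicShift σ) (fun x => w θ x.1 / N) _).trans ?_
  rw [Fintype.sum_prod_type]
  refine Finset.sum_congr rfl fun i _ => ?_
  simp only [smul_eq_mul, totalFlow_obedient_cyclicShift hσ, cyclicShift, ← Finset.mul_sum]
  rw [Fintype.sum_comp_add_left (σ i) k fun a => G a (z i)]
  simp only [nsmul_eq_mul, hσ, Finset.mul_sum]
  refine Finset.sum_congr rfl fun a _ => ?_
  field_simp [NeZero.ne (N : ℝ)]

theorem outcomeMeasure_cyclicInfo_obedient (hσ : ∀ i a, (#{k | σ i k = a} : ℝ) = N * z i a)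
    (θ : Θ) :
    outcomeMeasure (cyclicInfo σ w hw₀ hw₁).toInfo (cyclicInfo σ w hw₀ hw₁).obedient θ =
      ∑ i, ENNReal.ofReal (w θ i) • Measure.dirac (z i) := by
  have hπ : ∀ τ : ZMod N → A, ENNReal.ofReal ((cyclicInfo σ w hw₀ hw₁).π θ τ) =
      ∑ x, if τ = cyclicShift σ x then ENNReal.ofReal (w θ x.1 / N) else 0 := by
    intro τ
    rw [← ENNReal.ofReal_zero]
    simp only [← apply_ite ENNReal.ofReal]
    refine ENNReal.ofReal_sum_of_nonneg fun x _ => ?_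
    split_ifs
    exacts [div_nonneg (hw₀ θ x.1) (Nat.cast_nonneg N), le_rfl]
  show ∑ τ : ZMod N → A, ENNReal.ofReal ((cyclicInfo σ w hw₀ hw₁).π θ τ) • _ = _
  simp only [hπ]
  rw [Finset.sum_sum_ite_eq_smul]
  simp only [totalFlow_obedient_cyclicShift hσ, Fintype.sum_prod_type, Finset.sum_const,
    card_univ, ZMod.card]
  refine Finset.sum_congr rfl fun i _ => ?_
  rw [← Nat.cast_smul_eq_nsmul ENNReal, smul_smul, ← ENNReal.ofReal_natCast,
    ← ENNReal.ofReal_mul (Nat.cast_nonneg N), mul_div_cancel₀ _ (NeZero.ne (N : ℝ))]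

theorem cyclicInfo_obedient_isBWE [Fintype Θ] (p : Θ → ℝ) (c : A → (A → ℝ) → Θ → ℝ)
    (hσ : ∀ i a, (#{k | σ i k = a} : ℝ) = N * z i a)
    (hz : ∀ a b, ∑ θ, p θ * ∑ i, w θ i * (z i a * c a (z i) θ) ≤
      ∑ θ, p θ * ∑ i, w θ i * (z i a * c b (z i) θ)) :
    IsBWEps (cyclicInfo σ w hw₀ hw₁).toInfo p c 0 (cyclicInfo σ w hw₀ hw₁).obedient := by
  refine ⟨DirectInfoStructure.isInterim_obedient _, fun (k : ZMod N) (a : A) _ a' b ha => ?_⟩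
  obtain rfl : a = a' := by
    by_contra h
    simp [DirectInfoStructure.obedient, h] at ha
  have hθ θ : ∑ τ : ZMod N → A, (if τ k = a then p θ * (cyclicInfo σ w hw₀ hw₁).π θ τ *
      (c a (totalFlow (cyclicInfo σ w hw₀ hw₁).toInfo (cyclicInfo σ w hw₀ hw₁).obedient τ) θ -
        c b (totalFlow (cyclicInfo σ w hw₀ hw₁).toInfo (cyclicInfo σ w hw₀ hw₁).obedient τ) θ)
      else 0) = p θ * ∑ i, w θ i * (z i a * (c a (z i) θ - c b (z i) θ)) := by
    have := cyclicInfo_sum_π_mul (hw₀ := hw₀) (hw₁ := hw₁) hσ θ k fun a' y =>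
      if a' = a then p θ * (c a y θ - c b y θ) else 0
    simp only [mul_ite, mul_zero, Finset.sum_ite_eq', mem_univ, if_true] at this
    rw [Finset.mul_sum]
    convert this using 2 with τ _ i
    · split_ifs <;> ring
    · ring
  rw [zero_mul]
  refine (Finset.sum_congr rfl fun θ _ => hθ θ).trans_le ?_
  have := hz a b
  simp only [mul_sub, Finset.sum_sub_distrib]
  linarith

end CyclicSignals

theorem exists_pos_nat_forall_natCast_eq_mul {ι : Type*} [Fintype ι] {x : ι → ℝ}
    (hx : ∀ i, ∃ q : ℚ, x i = q) (hx₀ : ∀ i, 0 ≤ x i) :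
    ∃ N : ℕ, 0 < N ∧ ∃ m : ι → ℕ, ∀ i, (m i : ℝ) = N * x i := by
  choose q hq using hx
  refine ⟨∏ i, (q i).den, Finset.prod_pos fun i _ => (q i).den_pos, ?_⟩
  have hint : ∀ i, ∃ n : ℤ, (n : ℝ) = (∏ j, (q j).den : ℕ) * x i := by
    intro i
    obtain ⟨d, hd⟩ := Finset.dvd_prod_of_mem (fun j => (q j).den) (mem_univ i)
    have hnum : ((q i).num : ℝ) = q i * (q i).den := by exact_mod_cast (Rat.mul_den_eq_num _).symm
    exact ⟨d * (q i).num, by rw [hd, hq i]; push_cast; rw [hnum]; ring⟩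
  choose n hn using hint
  refine ⟨fun i => (n i).toNat, fun i => ?_⟩
  have hn₀ : 0 ≤ n i := by exact_mod_cast (hn i).symm ▸ mul_nonneg (Nat.cast_nonneg _) (hx₀ i)
  rw [← hn i, ← Int.toNat_of_nonneg hn₀]
  rfl

theorem exists_card_fiber_eq {K α : Type*} [Fintype K] [Fintype α] [DecidableEq α]
    (m : α → ℕ) (hm : ∑ a, m a = Fintype.card K) :
    ∃ s : K → α, ∀ a, #{k | s k = a} = m a := by
  let e : K ≃ Σ a, Fin (m a) := Fintype.equivOfCardEq (by simp [hm])
  refine ⟨fun k => (e k).1, fun a => ?_⟩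
  rw [Finset.card_filter, Equiv.sum_comp e fun x => if x.1 = a then 1 else 0,
    Fintype.sum_sigma]
  simp [apply_ite Finset.card]

theorem exists_directInfo_obedient_outcome_eq {A Θ ι : Type} [Fintype A] [DecidableEq A]
    [Fintype Θ] [Fintype ι] (p : Θ → ℝ) (c : A → (A → ℝ) → Θ → ℝ) {z : ι → A → ℝ}
    (hz : ∀ i, z i ∈ stdSimplex ℝ A) (hz_rat : ∀ i a, ∃ q : ℚ, z i a = q) {w : Θ → ι → ℝ}
    (hw₀ : ∀ θ i, 0 ≤ w θ i) (hw₁ : ∀ θ, ∑ i, w θ i = 1)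
    (hBCWE : ∀ a b, ∑ θ, p θ * ∑ i, w θ i * (z i a * c a (z i) θ) ≤
      ∑ θ, p θ * ∑ i, w θ i * (z i a * c b (z i) θ)) :
    ∃ I : DirectInfoStructure A Θ, IsBWEps I.toInfo p c 0 I.obedient ∧
      ∀ θ, outcomeMeasure I.toInfo I.obedient θ =
        ∑ i, ENNReal.ofReal (w θ i) • Measure.dirac (z i) := by
  obtain ⟨N, hN, m, hm⟩ := exists_pos_nat_forall_natCast_eq_mul (x := fun x : ι × A => z x.1 x.2)
    (fun x => hz_rat x.1 x.2) fun x => (hz x.1).1 x.2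
  have : NeZero N := ⟨hN.ne'⟩
  have hfiber : ∀ i, ∃ s : ZMod N → A, ∀ a, #{k | s k = a} = m (i, a) := by
    refine fun i => exists_card_fiber_eq _ ?_
    have : (∑ a, m (i, a) : ℝ) = N := by simp only [hm, ← Finset.mul_sum, (hz i).2, mul_one]
    rw [ZMod.card]
    exact_mod_cast this
  choose σ hσ using hfiber
  have hσz : ∀ i a, (#{k | σ i k = a} : ℝ) = N * z i a := fun i a => by rw [hσ, hm]
  exact ⟨cyclicInfo σ w hw₀ hw₁, cyclicInfo_obedient_isBWE p c hσz hBCWE,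
    outcomeMeasure_cyclicInfo_obedient hσz⟩

theorem _root_.MeasureTheory.integral_sum_ofReal_smul_dirac {ι α : Type*} [Fintype ι]
    [MeasurableSpace α] [MeasurableSingletonClass α] {w : ι → ℝ} (hw : ∀ i, 0 ≤ w i)
    (z : ι → α) (f : α → ℝ) :
    ∫ x, f x ∂(∑ i, ENNReal.ofReal (w i) • Measure.dirac (z i)) = ∑ i, w i * f (z i) := by
  rw [← Measure.sum_fintype, integral_sum_dirac fun i => ENNReal.ofReal_ne_top, tsum_fintype]
  simp [ENNReal.toReal_ofReal (hw _)]

theorem IsOutcome.exists_eq_sum_dirac {A Θ : Type} [Fintype A] {μ : Θ → Measure (A → ℝ)}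
    (hμ : IsOutcome μ) (S : Finset (A → ℝ)) (hS : ∀ θ, μ θ (↑S)ᶜ = 0) :
    ∃ (s : Finset (A → ℝ)) (w : Θ → s → ℝ), (∀ z ∈ s, z ∈ S ∧ z ∈ stdSimplex ℝ A) ∧
      (∀ θ i, 0 ≤ w θ i) ∧ (∀ θ, ∑ i, w θ i = 1) ∧
      ∀ θ, μ θ = ∑ i, ENNReal.ofReal (w θ i) • Measure.dirac (i : A → ℝ) := by
  classical
  let s : Finset (A → ℝ) := {z ∈ S | z ∈ stdSimplex ℝ A}
  let w θ (z : s) : ℝ := (μ θ).real {↑z}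
  have hw₀ θ z : 0 ≤ w θ z := measureReal_nonneg
  have hrepr θ : μ θ = ∑ z, ENNReal.ofReal (w θ z) • Measure.dirac (z : A → ℝ) := by
    have := hμ.1 θ
    have hnull : μ θ (↑s)ᶜ = 0 := by
      refine measure_mono_null (fun z hz => ?_) (measure_union_null (hS θ) (hμ.2 θ))
      simp only [s, Finset.coe_filter, Set.mem_compl_iff, Set.mem_ofPred_eq, not_and] at hz
      by_cases hzS : z ∈ S
      exacts [Or.inr (hz hzS), Or.inl hzS]
    conv_lhs => rw [Measure.ae_mem_finset_iff.1 (mem_ae_iff.2 hnull)]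
    rw [← Finset.sum_coe_sort]
    simp [w, ENNReal.ofReal_toReal (measure_ne_top (μ θ) _), measureReal_def]
  refine ⟨s, w, fun z hz => Finset.mem_filter.1 hz, hw₀, fun θ => ?_, hrepr⟩
  have := hμ.1 θ
  have := integral_sum_ofReal_smul_dirac (hw₀ θ) Subtype.val fun _ => (1 : ℝ)
  rw [← hrepr θ] at this
  simpa using this.symm

variable {A Θ : Type} [Fintype A] [DecidableEq A] [Fintype Θ]

theorem full_implementation_exact_general
    (p : Θ → ℝ) (hp_pos : ∀ θ, 0 < p θ)
    (c : A → (A → ℝ) → Θ → ℝ)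
    (Φ : Θ → (A → ℝ) → ℝ) (hΦ : IsPotential c Φ)
    (hconv : ∀ θ, StrictConvexOn ℝ (stdSimplex ℝ A) (Φ θ))
    (μ : Θ → MeasureTheory.Measure (A → ℝ)) (hμ : IsBCWE p c μ)
    (S : Finset (A → ℝ))
    (hS_rat : ∀ y ∈ S, ∀ a, ∃ q : ℚ, y a = (q : ℝ))
    (hS_supp : ∀ θ, μ θ ((↑S : Set (A → ℝ))ᶜ) = 0) :
    ∃ I : DirectInfoStructure A Θ,
      IsBWEps I.toInfo p c 0 I.obedient ∧
      (∀ θ, μ θ = outcomeMeasure I.toInfo I.obedient θ) ∧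
      ∀ yhat : ∀ k, I.toInfo.T k → A → ℝ, IsBWEps I.toInfo p c 0 yhat →
        ∀ θ, outcomeMeasure I.toInfo yhat θ = outcomeMeasure I.toInfo I.obedient θ := by
  obtain ⟨s, w, hs, hw₀, hw₁, hμs⟩ := hμ.1.exists_eq_sum_dirac S hS_supp
  have hBCWE : ∀ a b, ∑ θ, p θ * ∑ z : s, w θ z * (z.1 a * c a z θ) ≤
      ∑ θ, p θ * ∑ z : s, w θ z * (z.1 a * c b z θ) := fun a b => by
    simpa only [hμs, integral_sum_ofReal_smul_dirac (hw₀ _)] using hμ.2 a b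
  obtain ⟨I, hI, hIμ⟩ := exists_directInfo_obedient_outcome_eq p c (z := Subtype.val)
    (fun z => (hs z z.2).2) (fun z a => hS_rat z (hs z z.2).1 a) hw₀ hw₁ hBCWE
  exact ⟨I, hI, fun θ => (hμs θ).trans (hIμ θ).symm, fun yhat hy θ =>
    outcomeMeasure_congr fun τ hπ => hy.totalFlow_eq hp_pos hΦ hconv hI hπ⟩

/-- full implementation with strictly convex potential, exact version:
a BCWE with finite support and rational flows is implemented by a direct information
structure whose obedient profile is a Bayesian Wardrop equilibrium, whose obedient
outcome equals the BCWE, and whose Bayesian Wardrop equilibrium outcome is unique. -/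
theorem full_implementation_exact
    (p : Θ → ℝ) (hp_pos : ∀ θ, 0 < p θ) (hp_sum : ∑ θ, p θ = 1)
    (c : A → (A → ℝ) → Θ → ℝ)
    (hc : ∀ a θ, ContinuousOn (fun y => c a y θ) (stdSimplex ℝ A))
    (Φ : Θ → (A → ℝ) → ℝ) (hΦ : IsPotential c Φ)
    (hconv : ∀ θ, StrictConvexOn ℝ (stdSimplex ℝ A) (Φ θ))
    (μ : Θ → MeasureTheory.Measure (A → ℝ)) (hμ : IsBCWE p c μ)
    (S : Finset (A → ℝ))
    (hS_rat : ∀ y ∈ S, ∀ a, ∃ q : ℚ, y a = (q : ℝ))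
    (hS_supp : ∀ θ, μ θ ((↑S : Set (A → ℝ))ᶜ) = 0) :
    ∃ I : DirectInfoStructure A Θ,
      IsBWEps I.toInfo p c 0 I.obedient ∧
      (∀ θ, μ θ = outcomeMeasure I.toInfo I.obedient θ) ∧
      ∀ yhat : ∀ k, I.toInfo.T k → A → ℝ, IsBWEps I.toInfo p c 0 yhat →
        ∀ θ, outcomeMeasure I.toInfo yhat θ = outcomeMeasure I.toInfo I.obedient θ :=
  full_implementation_exact_general p hp_pos c Φ hΦ hconv μ hμ S hS_rat hS_supp

end NonatomicGames
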